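/- Let f : [0,1] → [0,1] be a piecewise continuous interval map with no connections and no periodic points, let p be a point whose forward orbit avoids the partition set D, let μ_n = (1/n) Σ_{k=0}^{n-1} δ_{f^k(p)}, and suppose μ_{n_j} → μ weak*. Then for every continuous function φ : [0,1] → ℝ, lim_{j→∞} ∫ (φ ∘ f) dμ_{n_j} = ∫ (φ ∘ f) dμ, even though φ ∘ f is in general only piecewise continuous. -/

import Mathlib

/-!
`φ ∘ f` is bounded and continuous off the closed set `D ∪ [0,1]ᶜ`, and weak convergence
passes to bounded functions that are continuous off a closed set of limit measure zero.
So it suffices that `μ` lives on `[0,1]` and has no atom at a partition point `x`.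
An orbit entering a small ball around `x` shadows, for the next `M` steps, the orbit of a
one-sided limit value of `f` at `x`, which never meets `D`; hence visits to the ball are
`M`-separated, have frequency at most `1/(M+1)`, and the portmanteau inequality gives
`μ {x} ≤ 1/(M+1)` for every `M`.
-/

open Set Filter MeasureTheory Topology
open scoped ENNReal

/-- Data witnessing that `f` is a piecewise continuous interval map on `[0,1]`:
a partition `0 = pt 0 < pt 1 < ⋯ < pt (d+1) = 1` such that `f` is continuous on each
open subinterval and has one-sided limits `wR i` (right limit at the left endpoint)
and `wL i` (left limit at the right endpoint) on each subinterval. -/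
structure PiecewiseContData (f : ℝ → ℝ) where
  d : ℕ
  pt : Fin (d + 2) → ℝ
  mono : StrictMono pt
  first : pt 0 = 0
  last : pt (Fin.last (d + 1)) = 1
  cont : ∀ i : Fin (d + 1), ContinuousOn f (Ioo (pt i.castSucc) (pt i.succ))
  wR : Fin (d + 1) → ℝ
  wL : Fin (d + 1) → ℝ
  wR_lim : ∀ i : Fin (d + 1),
    Tendsto f (𝓝[Ioo (pt i.castSucc) (pt i.succ)] (pt i.castSucc)) (𝓝 (wR i))
  wL_lim : ∀ i : Fin (d + 1),
    Tendsto f (𝓝[Ioo (pt i.castSucc) (pt i.succ)] (pt i.succ)) (𝓝 (wL i))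

/-- The set `D` of partition points. -/
def PiecewiseContData.D {f : ℝ → ℝ} (P : PiecewiseContData f) : Set ℝ :=
  Set.range P.pt

/-- The set `W` of one-sided limit values of `f` at the partition points. -/
def PiecewiseContData.W {f : ℝ → ℝ} (P : PiecewiseContData f) : Set ℝ :=
  Set.range P.wR ∪ Set.range P.wL

/-- The no-connections condition: no forward iterate (`k ≥ 1`) of a partition point lies
in `D`, and no forward iterate (`k ≥ 0`) of a one-sided limit value lies in `D`. -/
def PiecewiseContData.NoConnections {f : ℝ → ℝ} (P : PiecewiseContData f) : Prop :=
  (∀ i : Fin (P.d + 2), ∀ k : ℕ, 1 ≤ k → f^[k] (P.pt i) ∉ P.D) ∧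
  (∀ w ∈ P.W, ∀ k : ℕ, f^[k] w ∉ P.D)

/-- `f` has no periodic points in `[0,1]`. -/
def NoPeriodicPts (f : ℝ → ℝ) : Prop :=
  ∀ x ∈ Icc (0:ℝ) 1, ∀ k : ℕ, 1 ≤ k → f^[k] x ≠ x

/-- The Birkhoff average `μ_n = (1/n) ∑_{k<n} δ_{f^k(p)}` of Dirac measures along the
orbit of `p`. -/
noncomputable def birkhoffMeasure (f : ℝ → ℝ) (p : ℝ) (n : ℕ) : Measure ℝ :=
  (n : ℝ≥0∞)⁻¹ • ∑ k ∈ Finset.range n, Measure.dirac (f^[k] p)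

open Metric TopologicalSpace
open scoped BoundedContinuousFunction

lemma tendsto_of_forall_approx {ι α : Type*} [PseudoMetricSpace α] {L : Filter ι}
    {u : ι → α} {y : α}
    (h : ∀ ε > 0, ∃ v : ι → α, ∃ z, Tendsto v L (𝓝 z) ∧
      (∀ᶠ j in L, dist (u j) (v j) < ε) ∧ dist z y < ε) :
    Tendsto u L (𝓝 y) := by
  refine Metric.tendsto_nhds.2 fun ε hε => ?_
  obtain ⟨v, z, hv, huv, hzy⟩ := h (ε / 3) (by positivity)
  filter_upwards [huv, Metric.tendsto_nhds.1 hv (ε / 3) (by positivity)] with j h₁ h₂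
  calc dist (u j) y ≤ dist (u j) (v j) + dist (v j) z + dist z y := dist_triangle4 _ _ _ _
    _ < ε / 3 + ε / 3 + ε / 3 := by gcongr
    _ = ε := by ring

lemma exists_indicator_le_le_indicator {X : Type*} [TopologicalSpace X] [NormalSpace X]
    {F U : Set X} (hF : IsClosed F) (hU : IsOpen U) (hFU : F ⊆ U) :
    ∃ ψ : X →ᵇ ℝ, F.indicator 1 ≤ ⇑ψ ∧ ⇑ψ ≤ U.indicator 1 := by
  obtain ⟨ψ, hψU, hψF, hψ⟩ := exists_bounded_zero_one_of_closed hU.isClosed_compl hF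
    (disjoint_compl_left_iff_subset.2 hFU)
  refine ⟨ψ, fun x => ?_, fun x => ?_⟩
  · by_cases hx : x ∈ F
    · simp [hx, hψF hx]
    · simp [hx, (hψ x).1]
  · by_cases hx : x ∈ U
    · simp [hx, (hψ x).2]
    · simp [hx, hψU hx]

lemma integrable_of_continuousOn_compl {X : Type*} [TopologicalSpace X] [MeasurableSpace X]
    [OpensMeasurableSpace X] {m : Measure X} [IsFiniteMeasure m] {D : Set X}
    (hD : IsClosed D) (hmD : m D = 0) {g : X → ℝ} (hg : ContinuousOn g Dᶜ) {C : ℝ}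
    (hC : ∀ x ∉ D, ‖g x‖ ≤ C) : Integrable g m := by
  have hae : ∀ᵐ x ∂m, x ∈ Dᶜ := measure_eq_zero_iff_ae_notMem.1 hmD
  have hmeas : AEStronglyMeasurable g m := by
    simpa [Measure.restrict_eq_self_of_ae_mem hae] using
      hg.aestronglyMeasurable (μ := m) hD.isOpen_compl.measurableSet
  exact Integrable.mono' (integrable_const C) hmeas (hae.mono hC)

section WeakConvergence

variable {X ι : Type*} [MeasurableSpace X]

lemma measureReal_le_integral_of_indicator_le {m : Measure X} [IsFiniteMeasure m]
    {ψ : X → ℝ} (hψ : Integrable ψ m) {F : Set X} (hF : MeasurableSet F)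
    (h : F.indicator 1 ≤ ψ) : m.real F ≤ ∫ x, ψ x ∂m := by
  rw [← integral_indicator_one hF]
  exact integral_mono ((integrable_const 1).indicator hF) hψ h

lemma integral_le_measureReal_of_le_indicator {m : Measure X} [IsFiniteMeasure m]
    {ψ : X → ℝ} (hψ : Integrable ψ m) {U : Set X} (hU : MeasurableSet U)
    (h : ψ ≤ U.indicator 1) : ∫ x, ψ x ∂m ≤ m.real U := by
  rw [← integral_indicator_one hU]
  exact integral_mono hψ ((integrable_const 1).indicator hU) h

variable [TopologicalSpace X] [PseudoMetrizableSpace X] [BorelSpace X] {L : Filter ι}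
  {ν : ι → Measure X} [∀ j, IsFiniteMeasure (ν j)] {μ : Measure X} [IsFiniteMeasure μ]

/-- Portmanteau: `μ U ≤ liminf ν_j U` for open `U`. -/
lemma measureReal_le_of_tendsto_integral [L.NeBot]
    (hconv : ∀ ψ : X →ᵇ ℝ, Tendsto (fun j => ∫ x, ψ x ∂ν j) L (𝓝 (∫ x, ψ x ∂μ)))
    {U : Set X} (hU : IsOpen U) {c : ι → ℝ} {c₀ : ℝ}
    (hc : ∀ᶠ j in L, (ν j).real U ≤ c j) (hc₀ : Tendsto c L (𝓝 c₀)) :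
    μ.real U ≤ c₀ := by
  have hclosed : ∀ F ⊆ U, IsClosed F → μ.real F ≤ c₀ := by
    intro F hFU hF
    obtain ⟨ψ, hFψ, hψU⟩ := exists_indicator_le_le_indicator hF hU hFU
    refine (measureReal_le_integral_of_indicator_le (ψ.integrable μ) hF.measurableSet hFψ).trans
      (le_of_tendsto_of_tendsto (hconv ψ) hc₀ (hc.mono fun j hj => ?_))
    exact (integral_le_measureReal_of_le_indicator (ψ.integrable _) hU.measurableSet hψU).trans hj
  have hc₀_nonneg : 0 ≤ c₀ := ge_of_tendsto hc₀ (hc.mono fun j hj => measureReal_nonneg.trans hj)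
  by_contra! hlt
  obtain ⟨F, hFU, hF, hcF⟩ := hU.exists_lt_isClosed
    ((ENNReal.ofReal_lt_iff_lt_toReal hc₀_nonneg (measure_ne_top μ U)).2 hlt)
  exact (hclosed F hFU hF).not_gt
    ((ENNReal.ofReal_lt_iff_lt_toReal hc₀_nonneg (measure_ne_top μ F)).1 hcF)

theorem tendsto_integral_of_continuousOn_compl
    (hconv : ∀ ψ : X →ᵇ ℝ, Tendsto (fun j => ∫ x, ψ x ∂ν j) L (𝓝 (∫ x, ψ x ∂μ)))
    {D : Set X} (hD : IsClosed D) (hμD : μ D = 0) (hνD : ∀ j, ν j D = 0)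
    {g : X → ℝ} (hg : ContinuousOn g Dᶜ) (hg_bdd : ∃ C, ∀ x ∉ D, ‖g x‖ ≤ C) :
    Tendsto (fun j => ∫ x, g x ∂ν j) L (𝓝 (∫ x, g x ∂μ)) := by
  obtain ⟨C, hC₀, hC⟩ : ∃ C, 0 ≤ C ∧ ∀ x ∉ D, ‖g x‖ ≤ C := by
    obtain ⟨C, hC⟩ := hg_bdd
    exact ⟨max C 0, le_max_right _ _, fun x hx => (hC x hx).trans (le_max_left _ _)⟩
  refine tendsto_of_forall_approx fun ε hε => ?_
  obtain ⟨a, ha, hCa⟩ := exists_pos_mul_lt hε C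
  obtain ⟨U, hDU, hU, hμU⟩ := D.exists_isOpen_lt_of_lt (μ := μ) (ENNReal.ofReal a)
    (by simpa [hμD] using ha)
  obtain ⟨V, hV, hDV, hVU⟩ := normal_exists_closure_subset hD hU hDU
  obtain ⟨ψ, hVψ, hψU⟩ := exists_indicator_le_le_indicator isClosed_closure hU hVU
  have hψ : ∀ x, 0 ≤ ψ x ∧ ψ x ≤ 1 := fun x =>
    ⟨(indicator_nonneg (fun _ _ => zero_le_one) x).trans (hVψ x),
      (hψU x).trans (indicator_le_self' (fun _ _ => zero_le_one) x)⟩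
  have hψV : ∀ x ∈ V, ψ x = 1 := fun x hx =>
    le_antisymm (hψ x).2 (by simpa [subset_closure hx] using hVψ x)
  -- `(1 - ψ) * g` is continuous: it vanishes on the neighbourhood `V` of `D`
  have hcont : Continuous fun x => (1 - ψ x) * g x := by
    refine continuous_iff_continuousAt.2 fun x => ?_
    by_cases hx : x ∈ D
    · refine (continuousAt_const : ContinuousAt (fun _ => (0 : ℝ)) x).congr
        (eventually_of_mem (hV.mem_nhds (hDV hx)) fun y hy => ?_)
      simp [hψV y hy]
    · exact (continuous_const.sub ψ.continuous).continuousAt.mul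
        (hg.continuousAt (hD.isOpen_compl.mem_nhds hx))
  let h : X →ᵇ ℝ := .ofNormedAddCommGroup _ hcont C fun x => by
    by_cases hx : x ∈ D
    · simp [hψV x (hDV hx), hC₀]
    · rw [norm_mul]
      refine (mul_le_of_le_one_left (norm_nonneg _) ?_).trans (hC x hx)
      rw [Real.norm_eq_abs, abs_le]
      constructor <;> linarith [hψ x]
  have herr (m : Measure X) [IsFiniteMeasure m] (hmD : m D = 0) :
      dist (∫ x, g x ∂m) (∫ x, h x ∂m) ≤ C * ∫ x, ψ x ∂m := by
    have hgm := integrable_of_continuousOn_compl hD hmD hg hC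
    rw [dist_eq_norm, ← integral_sub hgm (h.integrable m), ← integral_const_mul]
    refine norm_integral_le_of_norm_le ((ψ.integrable m).const_mul C)
      ((measure_eq_zero_iff_ae_notMem.1 hmD).mono fun x hx => ?_)
    simp only [h, BoundedContinuousFunction.coe_ofNormedAddCommGroup]
    rw [show g x - (1 - ψ x) * g x = ψ x * g x by ring, norm_mul, Real.norm_of_nonneg (hψ x).1,
      mul_comm]
    exact mul_le_mul_of_nonneg_right (hC x hx) (hψ x).1
  have hψμ : ∫ x, ψ x ∂μ < a :=
    (integral_le_measureReal_of_le_indicator (ψ.integrable μ) hU.measurableSet hψU).trans_lt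
      (ENNReal.toReal_lt_of_lt_ofReal hμU)
  refine ⟨fun j => ∫ x, h x ∂ν j, ∫ x, h x ∂μ, hconv h, ?_, ?_⟩
  · filter_upwards [(hconv ψ).eventually_lt_const hψμ] with j hj
    exact (herr _ (hνD j)).trans_lt
      ((mul_le_mul_of_nonneg_left hj.le hC₀).trans_lt hCa)
  · rw [dist_comm]
    exact (herr μ hμD).trans_lt ((mul_le_mul_of_nonneg_left hψμ.le hC₀).trans_lt hCa)

end WeakConvergence

lemma tendsto_iterate_succ_of_tendsto {X : Type*} [TopologicalSpace X] {f : X → X}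
    {l : Filter X} {w : X} (h : Tendsto f l (𝓝 w)) (hc : ∀ m, ContinuousAt f (f^[m] w))
    (m : ℕ) : Tendsto f^[m + 1] l (𝓝 (f^[m] w)) := by
  induction m with
  | zero => simpa using h
  | succ m ih =>
    rw [Function.iterate_succ', Function.iterate_succ_apply']
    exact (hc m).tendsto.comp ih

open Finset in
/-- The windows `[k, k + M]` with `q k` are disjoint subsets of `[0, n + M)`. -/
lemma card_filter_range_mul_le_of_sparse {q : ℕ → Prop} [DecidablePred q] {M : ℕ}
    (hq : ∀ k, q k → ∀ m ≤ M, ¬ q (k + m + 1)) (n : ℕ) :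
    #{k ∈ range n | q k} * (M + 1) ≤ n + M := by
  set S := {k ∈ range n | q k}
  have hgap : ∀ k ∈ S, ∀ k' ∈ S, k < k' → k + M < k' := by
    intro k hk k' hk' hlt
    by_contra! hle
    refine hq k (mem_filter.1 hk).2 (k' - k - 1) (by omega) ?_
    rw [show k + (k' - k - 1) + 1 = k' by omega]
    exact (mem_filter.1 hk').2
  calc #S * (M + 1) = #(S ×ˢ range (M + 1)) := by rw [card_product, card_range]
    _ ≤ #(range (n + M)) := by
      refine card_le_card_of_injOn (fun q => q.1 + q.2) (fun q hq => ?_) fun a ha b hb hab => ?_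
      · simp only [coe_product, Set.mem_prod, mem_coe, Finset.mem_range] at hq ⊢
        have := Finset.mem_range.1 (mem_filter.1 hq.1).1
        omega
      · simp only [coe_product, Set.mem_prod, mem_coe, Finset.mem_range] at ha hb hab
        rcases lt_trichotomy a.1 b.1 with h | h | h
        · have := hgap _ ha.1 _ hb.1 h; omega
        · exact Prod.ext h (by omega)
        · have := hgap _ hb.1 _ ha.1 h; omega
    _ = n + M := card_range _

section Birkhoff

variable {f : ℝ → ℝ} {p : ℝ}

lemma birkhoffMeasure_apply (n : ℕ) (s : Set ℝ) :
    birkhoffMeasure f p n s = (n : ℝ≥0∞)⁻¹ * ∑ k ∈ Finset.range n, s.indicator 1 (f^[k] p) := by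
  simp [birkhoffMeasure, Measure.dirac_apply]

instance (n : ℕ) : IsFiniteMeasure (birkhoffMeasure f p n) := by
  refine ⟨(birkhoffMeasure_apply n univ).trans_lt ?_⟩
  rcases n.eq_zero_or_pos with rfl | hn
  · simp
  · simp [ENNReal.inv_mul_cancel (Nat.cast_ne_zero.2 hn.ne') (ENNReal.natCast_ne_top n)]

lemma birkhoffMeasure_eq_zero {s : Set ℝ} (hs : ∀ k, f^[k] p ∉ s) (n : ℕ) :
    birkhoffMeasure f p n s = 0 := by
  simp [birkhoffMeasure_apply, hs]

open Finset in
lemma birkhoffMeasure_real_le_of_sparse {s : Set ℝ} {M : ℕ}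
    (hs : ∀ k, f^[k] p ∈ s → ∀ m ≤ M, f^[k + m + 1] p ∉ s) (n : ℕ) :
    (birkhoffMeasure f p n).real s ≤ (1 + M / n) / (M + 1) := by
  classical
  have hcard := card_filter_range_mul_le_of_sparse hs n
  rcases n.eq_zero_or_pos with rfl | hn
  · simp [measureReal_def, birkhoffMeasure_apply]; positivity
  have hsum : ∑ k ∈ range n, s.indicator 1 (f^[k] p) =
      (#{k ∈ range n | f^[k] p ∈ s} : ℝ≥0∞) := by
    simp [Set.indicator_apply, Finset.sum_boole]
  have hn' : (0 : ℝ) < n := Nat.cast_pos.2 hn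
  rw [measureReal_def, birkhoffMeasure_apply, hsum, ENNReal.toReal_mul, ENNReal.toReal_inv,
    ENNReal.toReal_natCast, ENNReal.toReal_natCast]
  calc (n : ℝ)⁻¹ * #{k ∈ range n | f^[k] p ∈ s}
      = #{k ∈ range n | f^[k] p ∈ s} * (M + 1) / (n * (M + 1)) := by field_simp
    _ ≤ (n + M) / (n * (M + 1)) := by gcongr; exact_mod_cast hcard
    _ = (1 + M / n) / (M + 1) := by field_simp

end Birkhoff

namespace PiecewiseContData

variable {f : ℝ → ℝ} (P : PiecewiseContData f)

def regularSet : Set ℝ := ⋃ i : Fin (P.d + 1), Ioo (P.pt i.castSucc) (P.pt i.succ)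

lemma isOpen_regularSet : IsOpen P.regularSet := isOpen_iUnion fun _ => isOpen_Ioo

lemma continuousOn_regularSet : ContinuousOn f P.regularSet := fun x hx => by
  rw [regularSet, mem_iUnion] at hx
  obtain ⟨i, hi⟩ := hx
  exact ((P.cont i).continuousAt (Ioo_mem_nhds hi.1 hi.2)).continuousWithinAt

lemma pt_mem_Icc (t : Fin (P.d + 2)) : P.pt t ∈ Icc (0 : ℝ) 1 :=
  ⟨P.first ▸ P.mono.monotone (Fin.zero_le t), P.last ▸ P.mono.monotone (Fin.le_last t)⟩

lemma Ioo_subset_Icc (i : Fin (P.d + 1)) : Ioo (P.pt i.castSucc) (P.pt i.succ) ⊆ Icc 0 1 :=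
  Ioo_subset_Icc_self.trans (Icc_subset_Icc (P.pt_mem_Icc _).1 (P.pt_mem_Icc _).2)

lemma regularSet_subset_Icc : P.regularSet ⊆ Icc 0 1 := by
  rw [regularSet]
  exact iUnion_subset P.Ioo_subset_Icc

lemma mem_regularSet {x : ℝ} (hx : x ∈ Icc (0 : ℝ) 1) (hxD : x ∉ P.D) : x ∈ P.regularSet := by
  by_contra hxR
  simp only [regularSet, mem_iUnion, not_exists] at hxR
  have hne : ∀ t, P.pt t ≠ x := fun t h => hxD ⟨t, h⟩
  have hlt : ∀ t, P.pt t < x := by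
    intro t
    induction t using Fin.induction with
    | zero => exact (P.first ▸ hx.1).lt_of_ne (hne 0)
    | succ i ih => exact (not_lt.1 fun h => hxR i ⟨ih, h⟩).lt_of_ne (hne _)
  exact (hlt (Fin.last _)).not_ge (P.last ▸ hx.2)

lemma finite_W : P.W.Finite := (finite_range _).union (finite_range _)

lemma W_subset_Icc (hf : MapsTo f (Icc (0 : ℝ) 1) (Icc (0 : ℝ) 1)) : P.W ⊆ Icc 0 1 := by
  have hlt (i : Fin (P.d + 1)) : P.pt i.castSucc < P.pt i.succ := P.mono Fin.castSucc_lt_succ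
  have hmaps (i : Fin (P.d + 1)) (a : ℝ) :
      ∀ᶠ y in 𝓝[Ioo (P.pt i.castSucc) (P.pt i.succ)] a, f y ∈ Icc (0 : ℝ) 1 :=
    eventually_nhdsWithin_of_forall (hf.mono_left (P.Ioo_subset_Icc i))
  rintro w (⟨i, rfl⟩ | ⟨i, rfl⟩)
  · have := left_nhdsWithin_Ioo_neBot (hlt i)
    exact isClosed_Icc.mem_of_tendsto (P.wR_lim i) (hmaps i _)
  · have := right_nhdsWithin_Ioo_neBot (hlt i)
    exact isClosed_Icc.mem_of_tendsto (P.wL_lim i) (hmaps i _)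

/-- Vacuous (the filter is `⊥`) unless `x` is an endpoint of the piece. -/
lemma exists_tendsto_nhdsWithin_Ioo {x : ℝ} (hx : x ∈ P.D) (i : Fin (P.d + 1)) :
    ∃ w ∈ P.W, Tendsto f (𝓝[Ioo (P.pt i.castSucc) (P.pt i.succ)] x) (𝓝 w) := by
  obtain ⟨t, rfl⟩ := hx
  by_cases hl : t = i.castSucc
  · exact ⟨P.wR i, Or.inl ⟨i, rfl⟩, hl ▸ P.wR_lim i⟩
  by_cases hr : t = i.succ
  · exact ⟨P.wL i, Or.inr ⟨i, rfl⟩, hr ▸ P.wL_lim i⟩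
  refine ⟨P.wR i, Or.inl ⟨i, rfl⟩, ?_⟩
  suffices 𝓝[Ioo (P.pt i.castSucc) (P.pt i.succ)] (P.pt t) = ⊥ by rw [this]; exact tendsto_bot
  rw [← notMem_closure_iff_nhdsWithin_eq_bot, closure_Ioo (P.mono Fin.castSucc_lt_succ).ne]
  rintro ⟨h₁, h₂⟩
  rw [P.mono.le_iff_le, Fin.le_def] at h₁ h₂
  simp only [Fin.val_castSucc, Fin.val_succ] at h₁ h₂
  rcases (by omega : t.val = i.val ∨ t.val = i.val + 1) with h | h
  · exact hl (Fin.ext h)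
  · exact hr (Fin.ext h)

/-- For `z` close to `x`, the orbit of `z` shadows for `M + 1` steps the orbit of a one-sided
limit value of `f` at `x`, which never hits `D`. -/
lemma exists_pos_forall_dist_iterate_ge (hf : MapsTo f (Icc (0 : ℝ) 1) (Icc (0 : ℝ) 1))
    (hnc : P.NoConnections) {x : ℝ} (hx : x ∈ P.D) (M : ℕ) :
    ∃ δ > 0, ∀ z ∈ P.regularSet, dist z x < δ → ∀ m ≤ M, δ ≤ dist (f^[m + 1] z) x := by
  have hWorb : ∀ w ∈ P.W, ∀ m, f^[m] w ∈ P.regularSet := fun w hw m =>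
    P.mem_regularSet (hf.iterate m (P.W_subset_Icc hf hw)) (hnc.2 w hw m)
  have hr : ∀ᶠ r in 𝓝 (0 : ℝ), ∀ w ∈ P.W, ∀ m ∈ {m | m ≤ M}, r < dist (f^[m] w) x :=
    P.finite_W.eventually_all.2 fun w hw => (Set.finite_le_nat M).eventually_all.2 fun m _ =>
      eventually_lt_nhds (dist_pos.2 fun h => (hnc.2 w hw m) (h ▸ hx))
  obtain ⟨r, hr, hr₀⟩ := ((hr.filter_mono nhdsWithin_le_nhds).and
    (self_mem_nhdsWithin : Ioi (0 : ℝ) ∈ 𝓝[>] 0)).exists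
  have hev : ∀ᶠ z in 𝓝[P.regularSet] x, ∀ m ∈ {m | m ≤ M}, r < dist (f^[m + 1] z) x := by
    rw [regularSet, nhdsWithin_iUnion, eventually_iSup]
    intro i
    obtain ⟨w, hw, hfw⟩ := P.exists_tendsto_nhdsWithin_Ioo hx i
    have hcont (m : ℕ) : ContinuousAt f (f^[m] w) :=
      P.continuousOn_regularSet.continuousAt (P.isOpen_regularSet.mem_nhds (hWorb w hw m))
    refine (Set.finite_le_nat M).eventually_all.2 fun m hm => ?_
    exact ((tendsto_iterate_succ_of_tendsto hfw hcont m).dist tendsto_const_nhds).eventually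
      (lt_mem_nhds (hr w hw m hm))
  obtain ⟨ε, hε, hball⟩ := Metric.mem_nhdsWithin_iff.1 hev
  refine ⟨min ε r, lt_min hε hr₀, fun z hz hzx m hm => ?_⟩
  exact (min_le_right _ _).trans
    (hball ⟨mem_ball.2 (hzx.trans_le (min_le_left _ _)), hz⟩ m hm).le

end PiecewiseContData

section LimitMeasure

variable {f : ℝ → ℝ} {p : ℝ} {n : ℕ → ℕ} {μ : Measure ℝ} [IsFiniteMeasure μ]

lemma measure_compl_Icc_eq_zero_of_tendsto (hf : MapsTo f (Icc (0 : ℝ) 1) (Icc (0 : ℝ) 1))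
    (hp : p ∈ Icc (0 : ℝ) 1) (hconv : ∀ ψ : ℝ →ᵇ ℝ,
      Tendsto (fun j => ∫ x, ψ x ∂(birkhoffMeasure f p (n j))) atTop (𝓝 (∫ x, ψ x ∂μ))) :
    μ (Icc 0 1)ᶜ = 0 := by
  have hν (j : ℕ) : (birkhoffMeasure f p (n j)).real (Icc 0 1)ᶜ ≤ 0 := by
    rw [measureReal_def, birkhoffMeasure_eq_zero fun k => notMem_compl_iff.2 (hf.iterate k hp)]; rfl
  refine (measureReal_eq_zero_iff).1 (le_antisymm ?_ measureReal_nonneg)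
  exact measureReal_le_of_tendsto_integral hconv isClosed_Icc.isOpen_compl
    (Eventually.of_forall hν) tendsto_const_nhds

lemma PiecewiseContData.measure_singleton_eq_zero_of_tendsto {P : PiecewiseContData f}
    (hf : MapsTo f (Icc (0 : ℝ) 1) (Icc (0 : ℝ) 1)) (hnc : P.NoConnections)
    (hp : p ∈ Icc (0 : ℝ) 1) (hporb : ∀ k : ℕ, f^[k] p ∉ P.D) (hn : StrictMono n)
    (hconv : ∀ ψ : ℝ →ᵇ ℝ,
      Tendsto (fun j => ∫ x, ψ x ∂(birkhoffMeasure f p (n j))) atTop (𝓝 (∫ x, ψ x ∂μ)))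
    {x : ℝ} (hx : x ∈ P.D) : μ {x} = 0 := by
  have hM (M : ℕ) : μ.real {x} ≤ 1 / (M + 1) := by
    obtain ⟨δ, hδ, hret⟩ := P.exists_pos_forall_dist_iterate_ge hf hnc hx M
    have hsparse (k : ℕ) (hk : f^[k] p ∈ ball x δ) (m : ℕ) (hm : m ≤ M) :
        f^[k + m + 1] p ∉ ball x δ := by
      rw [mem_ball, not_lt, add_assoc, add_comm, Function.iterate_add_apply]
      exact hret _ (P.mem_regularSet (hf.iterate k hp) (hporb k)) hk m hm
    have hlim : Tendsto (fun j => (1 + M / (n j : ℝ)) / (M + 1)) atTop (𝓝 (1 / (M + 1))) := by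
      have := (tendsto_const_nhds (x := (M : ℝ))).div_atTop
        (tendsto_natCast_atTop_atTop.comp hn.tendsto_atTop)
      simpa using ((tendsto_const_nhds (x := (1 : ℝ))).add this).div_const ((M : ℝ) + 1)
    exact (measureReal_mono (singleton_subset_iff.2 (mem_ball_self hδ))).trans
      (measureReal_le_of_tendsto_integral hconv isOpen_ball
        (Eventually.of_forall fun j => birkhoffMeasure_real_le_of_sparse hsparse (n j)) hlim)
  refine (measureReal_eq_zero_iff).1 (le_antisymm ?_ measureReal_nonneg)
  exact ge_of_tendsto' tendsto_one_div_add_atTop_nhds_zero_nat hM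

lemma PiecewiseContData.measure_compl_regularSet_eq_zero_of_tendsto {P : PiecewiseContData f}
    (hf : MapsTo f (Icc (0 : ℝ) 1) (Icc (0 : ℝ) 1)) (hnc : P.NoConnections)
    (hp : p ∈ Icc (0 : ℝ) 1) (hporb : ∀ k : ℕ, f^[k] p ∉ P.D) (hn : StrictMono n)
    (hconv : ∀ ψ : ℝ →ᵇ ℝ,
      Tendsto (fun j => ∫ x, ψ x ∂(birkhoffMeasure f p (n j))) atTop (𝓝 (∫ x, ψ x ∂μ))) :
    μ P.regularSetᶜ = 0 := by
  have hD : μ P.D = 0 := by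
    rw [PiecewiseContData.D, ← Set.iUnion_singleton_eq_range]
    exact measure_iUnion_null fun t =>
      P.measure_singleton_eq_zero_of_tendsto hf hnc hp hporb hn hconv ⟨t, rfl⟩
  refine measure_mono_null (fun x hx => ?_)
    (measure_union_null (measure_compl_Icc_eq_zero_of_tendsto hf hp hconv) hD)
  by_contra hxD
  rw [mem_union, not_or, notMem_compl_iff] at hxD
  exact hx (P.mem_regularSet hxD.1 hxD.2)

end LimitMeasure

theorem stmt5_general (f : ℝ → ℝ) (hf : MapsTo f (Icc (0:ℝ) 1) (Icc (0:ℝ) 1))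
    (P : PiecewiseContData f) (hnc : P.NoConnections)
    (p : ℝ) (hp : p ∈ Icc (0:ℝ) 1) (hporb : ∀ k : ℕ, f^[k] p ∉ P.D)
    (n : ℕ → ℕ) (hn : StrictMono n) (μ : Measure ℝ) (hμ : IsProbabilityMeasure μ)
    (hconv : ∀ φ : ℝ → ℝ, Continuous φ →
      Tendsto (fun j => ∫ x, φ x ∂(birkhoffMeasure f p (n j))) atTop
        (𝓝 (∫ x, φ x ∂μ)))
    (φ : ℝ → ℝ) (hφ : Continuous φ) :
    Tendsto (fun j => ∫ x, φ (f x) ∂(birkhoffMeasure f p (n j))) atTop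
      (𝓝 (∫ x, φ (f x) ∂μ)) := by
  have hconv' (ψ : ℝ →ᵇ ℝ) := hconv ψ ψ.continuous
  obtain ⟨C, hC⟩ := isCompact_Icc.exists_bound_of_continuousOn (hφ.continuousOn (s := Icc 0 1))
  refine tendsto_integral_of_continuousOn_compl hconv' P.isOpen_regularSet.isClosed_compl
    (P.measure_compl_regularSet_eq_zero_of_tendsto hf hnc hp hporb hn hconv')
    (fun j => birkhoffMeasure_eq_zero
      (fun k => notMem_compl_iff.2 (P.mem_regularSet (hf.iterate k hp) (hporb k))) _)
    ?_ ⟨C, fun x hx => hC _ (hf (P.regularSet_subset_Icc (not_not.1 hx)))⟩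
  rw [compl_compl]
  exact hφ.comp_continuousOn P.continuousOn_regularSet

/-- along the weak*-convergent subsequence of Birkhoff averages, the
integrals of the (in general only piecewise continuous) function `φ ∘ f` also converge
to the integral against the limit measure, for every continuous `φ`. -/
theorem stmt5 (f : ℝ → ℝ) (hf : MapsTo f (Icc (0:ℝ) 1) (Icc (0:ℝ) 1))
    (P : PiecewiseContData f) (hnc : P.NoConnections) (hnp : NoPeriodicPts f)
    (p : ℝ) (hp : p ∈ Icc (0:ℝ) 1) (hporb : ∀ k : ℕ, f^[k] p ∉ P.D)
    (n : ℕ → ℕ) (hn : StrictMono n) (μ : Measure ℝ) (hμ : IsProbabilityMeasure μ)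
    (hconv : ∀ φ : ℝ → ℝ, Continuous φ →
      Tendsto (fun j => ∫ x, φ x ∂(birkhoffMeasure f p (n j))) atTop
        (𝓝 (∫ x, φ x ∂μ)))
    (φ : ℝ → ℝ) (hφ : Continuous φ) :
    Tendsto (fun j => ∫ x, φ (f x) ∂(birkhoffMeasure f p (n j))) atTop
      (𝓝 (∫ x, φ (f x) ∂μ)) :=
  stmt5_general f hf P hnc p hp hporb n hn μ hμ hconv φ hφ
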